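/- Let λ ≥ 0, γ ≥ 0 with λ·γ < 1, and let z ∈ ℂⁿ. Let x̂ ∈ ℂⁿ be a minimizer of x ↦ (1/2)·∑_{i=1}^{n} |z_i − x_i|² + λ·P^c_γ(x), and let u ∈ ℝⁿ be a minimizer of v ↦ (1/2)·∑_{i=1}^{n} (|z_i| − v_i)² + λ·P_γ(v), where |z| = (|z_1|, …, |z_n|). Then for every index k: if z_k ≠ 0 then x̂_k = u_k · (z_k / |z_k|), and if z_k = 0 then x̂_k = 0. -/

import Mathlib

/-!
Let `F = realCost n λ γ a` with `a = |z|`. By the reverse triangle inequality `Cc z x ≥ F |x|`, with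
equality iff every `x k` lies on the ray through `z k`. A minimizer `u` of `F` lies in the box
`0 ≤ u ≤ a` (clamping into the box lowers the cost), so rotating each `u k` onto the phase of
`z k` gives a complex vector of cost `F u = min F`. Hence `F |x̂| ≤ Cc x̂ ≤ F u`: both
inequalities are equalities, so `x̂` is aligned with `z` and `|x̂|` minimizes `F`. On the
nonnegative orthant the quadratic part of `F` is `((1 - λγ) ∑ vᵢ² + λγ (∑ vᵢ)²) / 2`, strictly
convex for `λγ < 1`, so `|x̂| = u`.
-/

open Finset

/-- The penalty `P_gamma(x) = gamma * (sum_{i<m} |x_i| |x_m|) + sum_i |x_i|` on R^n. -/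
noncomputable def P (n : ℕ) (γ : ℝ) (x : Fin n → ℝ) : ℝ :=
  γ * (∑ i : Fin n, ∑ m ∈ Finset.Ioi i, |x i| * |x m|) + ∑ i : Fin n, |x i|

/-- The complex penalty `Pc_gamma(x) = gamma * (sum_{i<m} |x_i| |x_m|) + sum_i |x_i|` on C^n. -/
noncomputable def Pc (n : ℕ) (γ : ℝ) (x : Fin n → ℂ) : ℝ :=
  γ * (∑ i : Fin n, ∑ m ∈ Finset.Ioi i, ‖x i‖ * ‖x m‖) + ∑ i : Fin n, ‖x i‖

/-- The complex cost. -/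
noncomputable def Cc (n : ℕ) (lam γ : ℝ) (z x : Fin n → ℂ) : ℝ :=
  (1 / 2) * ∑ i : Fin n, ‖z i - x i‖ ^ 2 + lam * Pc n γ x

theorem Finset.sq_sum_eq_sum_sq_add_two_mul_sum_Ioi {ι R : Type*} [Fintype ι] [LinearOrder ι]
    [LocallyFiniteOrderTop ι] [LocallyFiniteOrderBot ι] [CommRing R] (f : ι → R) :
    (∑ i, f i) ^ 2 = ∑ i, f i ^ 2 + 2 * ∑ i, ∑ j ∈ Ioi i, f i * f j := by
  classical
  have hoff := sum_sum_Ioi_add_eq_sum_sum_off_diag fun j i => f j * f i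
  have hdiag : ∀ i, ∑ j, f j * f i = f i ^ 2 + ∑ j ∈ {i}ᶜ, f j * f i := fun i => by
    rw [Fintype.sum_eq_add_sum_compl i, sq]
  rw [sq, Fintype.sum_mul_sum, Finset.sum_comm, Finset.sum_congr rfl fun i _ => hdiag i,
    Finset.sum_add_distrib, ← hoff, Finset.mul_sum]
  congr 1
  refine Finset.sum_congr rfl fun i _ => ?_
  rw [Finset.mul_sum]
  exact Finset.sum_congr rfl fun j _ => by ring

theorem Pc_eq_P_norm (n : ℕ) (γ : ℝ) (x : Fin n → ℂ) : Pc n γ x = P n γ (fun i => ‖x i‖) := by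
  simp only [Pc, P, abs_norm]

theorem P_mono {n : ℕ} {γ : ℝ} (hγ : 0 ≤ γ) {v w : Fin n → ℝ} (h : ∀ i, |v i| ≤ |w i|) :
    P n γ v ≤ P n γ w := by
  have hprod : ∀ i m, |v i| * |v m| ≤ |w i| * |w m| := fun i m =>
    mul_le_mul (h i) (h m) (abs_nonneg _) (abs_nonneg _)
  exact add_le_add (mul_le_mul_of_nonneg_left
    (sum_le_sum fun i _ => sum_le_sum fun m _ => hprod i m) hγ) (sum_le_sum fun i _ => h i)

theorem P_of_nonneg {n : ℕ} (γ : ℝ) {v : Fin n → ℝ} (hv : 0 ≤ v) :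
    P n γ v = γ / 2 * ((∑ i, v i) ^ 2 - ∑ i, v i ^ 2) + ∑ i, v i := by
  have hv' : ∀ i, |v i| = v i := fun i => abs_of_nonneg (hv i)
  rw [Finset.sq_sum_eq_sum_sq_add_two_mul_sum_Ioi]
  simp only [P, hv']
  ring

noncomputable def realCost (n : ℕ) (lam γ : ℝ) (a v : Fin n → ℝ) : ℝ :=
  (1 / 2) * ∑ i : Fin n, (a i - v i) ^ 2 + lam * P n γ v

section RealProblem

variable {n : ℕ} {lam γ : ℝ} {a u v : Fin n → ℝ}

theorem realCost_add_sub_two_mul_midpoint (hu : 0 ≤ u) (hv : 0 ≤ v) :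
    realCost n lam γ a u + realCost n lam γ a v
        - 2 * realCost n lam γ a (fun i => (u i + v i) / 2) =
      ((1 - lam * γ) * ∑ i, (u i - v i) ^ 2 + lam * γ * (∑ i, (u i - v i)) ^ 2) / 4 := by
  have hm : 0 ≤ fun i => (u i + v i) / 2 := fun i =>
    div_nonneg (add_nonneg (hu i) (hv i)) zero_le_two
  have h₁ : ∑ i, (a i - (u i + v i) / 2) ^ 2
      = (∑ i, (a i - u i) ^ 2 + ∑ i, (a i - v i) ^ 2) / 2 - (∑ i, (u i - v i) ^ 2) / 4 := by
    have : ∀ i, (a i - (u i + v i) / 2) ^ 2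
        = ((a i - u i) ^ 2 + (a i - v i) ^ 2) / 2 - (u i - v i) ^ 2 / 4 := fun i => by ring
    simp only [this, Finset.sum_sub_distrib, ← Finset.sum_div, Finset.sum_add_distrib]
  have h₂ : ∑ i, ((u i + v i) / 2) ^ 2
      = (∑ i, u i ^ 2 + ∑ i, v i ^ 2) / 2 - (∑ i, (u i - v i) ^ 2) / 4 := by
    have : ∀ i, ((u i + v i) / 2) ^ 2 = (u i ^ 2 + v i ^ 2) / 2 - (u i - v i) ^ 2 / 4 :=
      fun i => by ring
    simp only [this, Finset.sum_sub_distrib, ← Finset.sum_div, Finset.sum_add_distrib]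
  have h₃ : ∑ i, (u i + v i) / 2 = (∑ i, u i + ∑ i, v i) / 2 := by
    rw [← Finset.sum_div, Finset.sum_add_distrib]
  simp only [realCost, P_of_nonneg γ hu, P_of_nonneg γ hv, P_of_nonneg γ hm, h₁, h₂, h₃,
    Finset.sum_sub_distrib]
  ring

theorem eq_of_realCost_le (hlγ₀ : 0 ≤ lam * γ) (hlγ : lam * γ < 1) (hu₀ : 0 ≤ u) (hv₀ : 0 ≤ v)
    (hu : ∀ w, realCost n lam γ a u ≤ realCost n lam γ a w)
    (hv : realCost n lam γ a v ≤ realCost n lam γ a u) : u = v := by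
  have hmid := realCost_add_sub_two_mul_midpoint (lam := lam) (γ := γ) (a := a) hu₀ hv₀
  have hsq : ∑ i, (u i - v i) ^ 2 = 0 := by
    have := hu fun i => (u i + v i) / 2
    have := Finset.sum_nonneg fun i (_ : i ∈ univ) => sq_nonneg (u i - v i)
    nlinarith [sq_nonneg (∑ i, (u i - v i))]
  funext i
  have := (Finset.sum_eq_zero_iff_of_nonneg fun i _ => sq_nonneg (u i - v i)).mp hsq i (mem_univ i)
  linarith [pow_eq_zero_iff (n := 2) two_ne_zero |>.mp this]

theorem sq_sub_clamp_lt {a u : ℝ} (ha : 0 ≤ a) (hu : u ∉ Set.Icc 0 a) :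
    (a - max 0 (min u a)) ^ 2 < (a - u) ^ 2 := by
  rw [Set.mem_Icc, not_and_or, not_le, not_le] at hu
  rcases hu with hu | hu
  · rw [min_eq_left (by linarith), max_eq_left hu.le]
    nlinarith
  · rw [min_eq_right hu.le, max_eq_right ha]
    nlinarith

theorem sq_sub_clamp_le {a u : ℝ} (ha : 0 ≤ a) : (a - max 0 (min u a)) ^ 2 ≤ (a - u) ^ 2 := by
  by_cases hu : u ∈ Set.Icc 0 a
  · rw [min_eq_left hu.2, max_eq_right hu.1]
  · exact (sq_sub_clamp_lt ha hu).le

theorem abs_clamp_le {a u : ℝ} : |max 0 (min u a)| ≤ |u| := by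
  rcases le_total u 0 with hu | hu
  · simp [max_eq_left (min_le_of_left_le hu)]
  · rw [abs_of_nonneg (le_max_left _ _), abs_of_nonneg hu]
    exact max_le hu (min_le_left _ _)

theorem realCost_minimizer_mem_Icc (hlam : 0 ≤ lam) (hγ : 0 ≤ γ) (ha : 0 ≤ a)
    (hu : ∀ w, realCost n lam γ a u ≤ realCost n lam γ a w) (k : Fin n) :
    u k ∈ Set.Icc 0 (a k) := by
  by_contra hk
  set w : Fin n → ℝ := fun i => max 0 (min (u i) (a i))
  have hsum : ∑ i, (a i - w i) ^ 2 < ∑ i, (a i - u i) ^ 2 :=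
    Finset.sum_lt_sum (fun i _ => sq_sub_clamp_le (ha i)) ⟨k, mem_univ k, sq_sub_clamp_lt (ha k) hk⟩
  have hP : P n γ w ≤ P n γ u := P_mono hγ fun i => abs_clamp_le
  have := hu w
  unfold realCost at this
  nlinarith

end RealProblem

namespace Complex

theorem norm_div_norm {z : ℂ} (hz : z ≠ 0) : ‖z / (‖z‖ : ℂ)‖ = 1 := by
  rw [norm_div, norm_real, norm_norm, div_self (norm_ne_zero_iff.mpr hz)]

theorem norm_ofReal_mul_div_norm {z : ℂ} (hz : z ≠ 0) (r : ℝ) :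
    ‖(r : ℂ) * (z / (‖z‖ : ℂ))‖ = |r| := by
  rw [norm_mul, norm_div_norm hz, mul_one, norm_real, Real.norm_eq_abs]

theorem norm_sub_ofReal_mul_div_norm {z : ℂ} (hz : z ≠ 0) (r : ℝ) :
    ‖z - (r : ℂ) * (z / (‖z‖ : ℂ))‖ = |‖z‖ - r| := by
  have hz' : (‖z‖ : ℂ) ≠ 0 := ofReal_ne_zero.mpr (norm_ne_zero_iff.mpr hz)
  have : z - (r : ℂ) * (z / (‖z‖ : ℂ)) = ((‖z‖ - r : ℝ) : ℂ) * (z / (‖z‖ : ℂ)) := by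
    push_cast
    field_simp
  rw [this, norm_ofReal_mul_div_norm hz]

end Complex

theorem SameRay.eq_ofReal_norm_mul_div_norm {z x : ℂ} (h : SameRay ℝ z x) (hz : z ≠ 0) :
    x = (‖x‖ : ℂ) * (z / (‖z‖ : ℂ)) := by
  have hz' : (‖z‖ : ℂ) ≠ 0 := Complex.ofReal_ne_zero.mpr (norm_ne_zero_iff.mpr hz)
  have := h.norm_smul_eq
  simp only [Complex.real_smul] at this
  field_simp
  linear_combination this

theorem sq_norm_sub_norm_le {E : Type*} [SeminormedAddCommGroup E] (z x : E) :
    (‖z‖ - ‖x‖) ^ 2 ≤ ‖z - x‖ ^ 2 := by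
  rw [← sq_abs]
  exact pow_le_pow_left₀ (abs_nonneg _) (abs_norm_sub_norm_le z x) 2

section ComplexProblem

variable {n : ℕ} {lam γ : ℝ}

theorem Cc_sub_realCost_norm (z x : Fin n → ℂ) :
    Cc n lam γ z x - realCost n lam γ (fun i => ‖z i‖) (fun i => ‖x i‖)
      = (1 / 2) * (∑ i, ‖z i - x i‖ ^ 2 - ∑ i, (‖z i‖ - ‖x i‖) ^ 2) := by
  rw [Cc, realCost, Pc_eq_P_norm]
  ring

theorem realCost_norm_le_Cc (z x : Fin n → ℂ) :
    realCost n lam γ (fun i => ‖z i‖) (fun i => ‖x i‖) ≤ Cc n lam γ z x := by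
  have := Finset.sum_le_sum fun i (_ : i ∈ univ) => sq_norm_sub_norm_le (z i) (x i)
  linarith [Cc_sub_realCost_norm (lam := lam) (γ := γ) z x]

theorem sameRay_of_Cc_le_realCost_norm {z x : Fin n → ℂ}
    (h : Cc n lam γ z x ≤ realCost n lam γ (fun i => ‖z i‖) (fun i => ‖x i‖)) (k : Fin n) :
    SameRay ℝ (z k) (x k) := by
  have hsum : ∑ i, (‖z i‖ - ‖x i‖) ^ 2 = ∑ i, ‖z i - x i‖ ^ 2 :=
    le_antisymm (Finset.sum_le_sum fun i _ => sq_norm_sub_norm_le (z i) (x i))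
      (by linarith [Cc_sub_realCost_norm (lam := lam) (γ := γ) z x])
  have hk := (Finset.sum_eq_sum_iff_of_le fun i _ => sq_norm_sub_norm_le (z i) (x i)).mp hsum k
    (mem_univ k)
  rw [sameRay_iff_norm_sub, ← sq_eq_sq₀ (norm_nonneg _) (abs_nonneg _), sq_abs]
  exact hk.symm

theorem Cc_ofReal_mul_div_norm {z : Fin n → ℂ} {u : Fin n → ℝ} (hu : 0 ≤ u)
    (hzu : ∀ k, z k = 0 → u k = 0) :
    Cc n lam γ z (fun k => (u k : ℂ) * (z k / (‖z k‖ : ℂ))) =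
      realCost n lam γ (fun i => ‖z i‖) u := by
  have hnorm : ∀ k, ‖(u k : ℂ) * (z k / (‖z k‖ : ℂ))‖ = u k := fun k => by
    by_cases hz : z k = 0
    · simp [hz, hzu k hz]
    · rw [Complex.norm_ofReal_mul_div_norm hz, abs_of_nonneg (hu k)]
  have hdist : ∀ k, ‖z k - (u k : ℂ) * (z k / (‖z k‖ : ℂ))‖ ^ 2 = (‖z k‖ - u k) ^ 2 :=
    fun k => by
      by_cases hz : z k = 0
      · simp [hz, hzu k hz]
      · rw [Complex.norm_sub_ofReal_mul_div_norm hz, sq_abs]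
  simp only [Cc, realCost, Pc_eq_P_norm, hnorm, hdist]

end ComplexProblem

/-- Prop. 6: the complex threshold is obtained by thresholding the magnitudes and
restoring the arguments. -/
theorem complex_thold (n : ℕ) (lam γ : ℝ) (hlam : 0 ≤ lam) (hγ : 0 ≤ γ)
    (hlγ : lam * γ < 1) (z : Fin n → ℂ) (xh : Fin n → ℂ) (u : Fin n → ℝ)
    (hxh : ∀ x, Cc n lam γ z xh ≤ Cc n lam γ z x)
    (hu : ∀ v : Fin n → ℝ,
      (1 / 2) * ∑ i : Fin n, (‖z i‖ - u i) ^ 2 + lam * P n γ u ≤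
      (1 / 2) * ∑ i : Fin n, (‖z i‖ - v i) ^ 2 + lam * P n γ v) :
    ∀ k : Fin n,
      (z k ≠ 0 → xh k = (u k : ℂ) * (z k / (‖z k‖ : ℂ))) ∧
      (z k = 0 → xh k = 0) := by
  change ∀ v, realCost n lam γ (fun i => ‖z i‖) u ≤ realCost n lam γ (fun i => ‖z i‖) v at hu
  have hbox := realCost_minimizer_mem_Icc hlam hγ (fun i => norm_nonneg (z i)) hu
  have hu₀ : 0 ≤ u := fun k => (hbox k).1
  have hzu : ∀ k, z k = 0 → u k = 0 := fun k hz =>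
    le_antisymm (by simpa [hz] using (hbox k).2) (hbox k).1
  have hxh_le := hxh fun k => (u k : ℂ) * (z k / (‖z k‖ : ℂ))
  rw [Cc_ofReal_mul_div_norm hu₀ hzu] at hxh_le
  have hcost := realCost_norm_le_Cc (lam := lam) (γ := γ) z xh
  have hux : u = fun k => ‖xh k‖ :=
    eq_of_realCost_le (mul_nonneg hlam hγ) hlγ hu₀ (fun k => norm_nonneg _) hu
      (hcost.trans hxh_le)
  have hray := sameRay_of_Cc_le_realCost_norm (hxh_le.trans (hu _))
  intro k
  rw [congrFun hux k]
  refine ⟨fun hz => (hray k).eq_ofReal_norm_mul_div_norm hz, fun hz => ?_⟩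
  rw [← norm_eq_zero, ← congrFun hux k, hzu k hz]
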